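/- Let λ₁, …, λₙ ∈ ℂ be pairwise distinct and such that λᵢ ∉ ℝ and λ_{n+1−i} = conj(λᵢ) for 1 ≤ i ≤ r, while λᵢ ∈ ℝ for r < i ≤ n − r, and let S := diag(λ₁, …, λₙ). Then {X ∈ 𝔥_T : there exists c ∈ ℝ with [X,S] = c·S} equals the set of diagonal matrices diag(z₁, …, z_r, i·x₁, …, i·x_{n−2r}, −conj(z_r), …, −conj(z₁)) with z₁, …, z_r ∈ ℂ and x₁, …, x_{n−2r} ∈ ℝ satisfying 2·(Im z₁ + ⋯ + Im z_r) + (x₁ + ⋯ + x_{n−2r}) = 0. In particular this set is a real vector space of dimension n − 1 and is invariant under the conjugate-transpose map X ↦ X†. -/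

import Mathlib

/-!
Since the `λᵢ` are distinct, the `(i, j)` entry of `[X, S]` for `i ≠ j` is
`(λⱼ - λᵢ) X_{ij}`, while `c S` is diagonal; so `X` is diagonal and then `[X, S] = 0`.
For `X = diag d` the condition `X† T + T X = 0` reads `conj dᵢ + d_{σ i} = 0`, where `σ` is
the involution `i ↦ n + 1 - i` on the first and last `r` indices and the identity on the
middle ones; its solutions are exactly the stated diagonals, whose trace is
`i (2 Σ Im zᵢ + Σ xⱼ)`. Recording the real and imaginary parts of the `zᵢ` and the `xⱼ` in
one vector of `ℝⁿ` identifies the set with the kernel of a nonzero linear form on `ℝⁿ`,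
hence its dimension `n - 1`.
-/

open Matrix

/-- The matrix `T_{p,q,r}` with block rows `[0,0,R_r]`, `[0,I_{p-r,q-r},0]`, `[R_r,0,0]`,
where `R_r` is the `r × r` anti-diagonal matrix of ones. -/
noncomputable def Tpqr (p q r : ℕ) : Matrix (Fin (p + q)) (Fin (p + q)) ℂ :=
  Matrix.of fun i j =>
    if (i : ℕ) < r ∨ p + q - r ≤ (i : ℕ) then
      (if (i : ℕ) + (j : ℕ) = p + q - 1 then 1 else 0)
    else if j = i then (if (i : ℕ) < p then 1 else -1) else 0

section Commutator

variable {n K : Type*} [Fintype n] [DecidableEq n] [CommRing K] [NoZeroDivisors K]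

theorem exists_commutator_diagonal_eq_smul_iff {R : Type*} [Zero R] [SMulWithZero R K]
    {lam : n → K} (hlam : Function.Injective lam) (A : Matrix n n K) :
    (∃ c : R, A * diagonal lam - diagonal lam * A = c • diagonal lam) ↔
      A = diagonal fun i => A i i := by
  constructor
  · rintro ⟨c, hc⟩
    ext i j
    rcases eq_or_ne i j with rfl | hij
    · simp
    · have h := congrFun (congrFun hc i) j
      simp only [Matrix.sub_apply, mul_diagonal, diagonal_mul, Matrix.smul_apply,
        diagonal_apply_ne _ hij, smul_zero] at h
      have h' : A i j * (lam j - lam i) = 0 := by linear_combination h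
      simpa [diagonal_apply_ne _ hij, sub_eq_zero, (hlam.ne hij).symm] using h'
  · intro hA
    refine ⟨0, ?_⟩
    rw [hA]
    ext i j
    simp [diagonal_apply, mul_comm]

theorem diagonal_conjTranspose_mul_add_mul_diagonal_eq_zero_iff [StarRing K]
    (M : Matrix n n K) (d : n → K) :
    (diagonal d)ᴴ * M + M * diagonal d = 0 ↔ ∀ i j, M i j ≠ 0 → star (d i) + d j = 0 := by
  simp only [diagonal_conjTranspose, ← Matrix.ext_iff, Matrix.add_apply, diagonal_mul,
    mul_diagonal, Matrix.zero_apply, Pi.star_apply]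
  refine forall₂_congr fun i j => ?_
  rw [mul_comm, ← mul_add, mul_eq_zero, or_iff_not_imp_left]

end Commutator

def tpqrPartner (r : ℕ) {n : ℕ} (i : Fin n) : Fin n :=
  if (i : ℕ) < r ∨ n - r ≤ (i : ℕ) then i.rev else i

theorem tpqrPartner_tpqrPartner (r : ℕ) {n : ℕ} (i : Fin n) :
    tpqrPartner r (tpqrPartner r i) = i := by
  unfold tpqrPartner
  split_ifs <;> simp_all [Fin.ext_iff, Fin.val_rev]
  omega

theorem Tpqr_ne_zero_iff {p q r : ℕ} (i j : Fin (p + q)) :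
    Tpqr p q r i j ≠ 0 ↔ j = tpqrPartner r i := by
  unfold Tpqr tpqrPartner
  simp only [of_apply]
  split_ifs <;> simp_all [Fin.ext_iff, Fin.val_rev] <;> omega

theorem diagonal_conjTranspose_mul_Tpqr_add_eq_zero_iff {p q r : ℕ} (d : Fin (p + q) → ℂ) :
    (diagonal d)ᴴ * Tpqr p q r + Tpqr p q r * diagonal d = 0 ↔
      ∀ i, star (d i) + d (tpqrPartner r i) = 0 := by
  rw [diagonal_conjTranspose_mul_add_mul_diagonal_eq_zero_iff]
  simp only [Tpqr_ne_zero_iff, forall_eq]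

theorem star_add_star_tpqrPartner {r n : ℕ} {d : Fin n → ℂ}
    (hd : ∀ i, star (d i) + d (tpqrPartner r i) = 0) (i : Fin n) :
    star (star (d i)) + star (d (tpqrPartner r i)) = 0 := by
  simpa [add_comm, tpqrPartner_tpqrPartner] using hd (tpqrPartner r i)

section Stabilizer

variable {n r : ℕ}

theorem Fin.sum_univ_eq_sum_lt_add_rev_add_sum_middle {M : Type*} [AddCommMonoid M]
    (h2r : 2 * r ≤ n) (f : Fin n → M) :
    ∑ i, f i =
      ∑ i ∈ Finset.univ.filter (fun i : Fin n => (i : ℕ) < r), (f i + f i.rev) +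
        ∑ i ∈ Finset.univ.filter (fun i : Fin n => r ≤ (i : ℕ) ∧ (i : ℕ) < n - r), f i := by
  rw [← Finset.sum_filter_add_sum_filter_not Finset.univ
    (fun i : Fin n => r ≤ (i : ℕ) ∧ (i : ℕ) < n - r), add_comm, Finset.sum_add_distrib]
  congr 1
  have hsplit : Finset.univ.filter (fun i : Fin n => ¬(r ≤ (i : ℕ) ∧ (i : ℕ) < n - r)) =
      Finset.univ.filter (fun i : Fin n => (i : ℕ) < r) ∪
        Finset.univ.filter (fun i : Fin n => n - r ≤ (i : ℕ)) := by
    ext i; simp only [Finset.mem_filter, Finset.mem_univ, true_and, Finset.mem_union]; omega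
  rw [hsplit, Finset.sum_union (Finset.disjoint_filter.2 fun i _ _ => by omega)]
  congr 1
  refine Finset.sum_nbij' Fin.rev Fin.rev ?_ ?_ (fun i _ => Fin.rev_rev i)
    (fun i _ => Fin.rev_rev i) (fun i _ => by rw [Fin.rev_rev])
  all_goals
    intro i hi
    simp only [Finset.mem_filter, Finset.mem_univ, true_and, Fin.val_rev] at hi ⊢
    omega

noncomputable def stabilizerDiag (r : ℕ) (z : Fin n → ℂ) (x : Fin n → ℝ) (i : Fin n) : ℂ :=
  if (i : ℕ) < r then z i
  else if (i : ℕ) < n - r then Complex.I * (x i : ℂ)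
  else -(starRingEnd ℂ) (z i.rev)

theorem stabilizerDiag_rev_of_lt (h2r : 2 * r ≤ n) (z : Fin n → ℂ) (x : Fin n → ℝ)
    {i : Fin n} (hi : (i : ℕ) < r) : stabilizerDiag r z x i.rev = -(starRingEnd ℂ) (z i) := by
  have h₁ : ¬(i.rev : ℕ) < r := by rw [Fin.val_rev]; omega
  have h₂ : ¬(i.rev : ℕ) < n - r := by rw [Fin.val_rev]; omega
  simp only [stabilizerDiag, h₁, h₂, if_false, Fin.rev_rev]

theorem exists_eq_stabilizerDiag_iff (h2r : 2 * r ≤ n) (d : Fin n → ℂ) :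
    (∃ z x, d = stabilizerDiag r z x) ↔ ∀ i, star (d i) + d (tpqrPartner r i) = 0 := by
  constructor
  · rintro ⟨z, x, rfl⟩ i
    by_cases h₁ : (i : ℕ) < r
    · have hσ : tpqrPartner r i = i.rev := if_pos (Or.inl h₁)
      rw [hσ, stabilizerDiag_rev_of_lt h2r z x h₁]
      simp [stabilizerDiag, h₁]
    by_cases h₂ : (i : ℕ) < n - r
    · have hσ : tpqrPartner r i = i := if_neg (by omega)
      simp [hσ, stabilizerDiag, h₁, h₂]
    · have hσ : tpqrPartner r i = i.rev := if_pos (Or.inr (by omega))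
      have hrev : (i.rev : ℕ) < r := by rw [Fin.val_rev]; omega
      simp only [hσ, stabilizerDiag, h₁, h₂, hrev, if_false, if_true]
      simp
  · intro hd
    refine ⟨d, fun i => (d i).im, funext fun i => ?_⟩
    by_cases h₁ : (i : ℕ) < r
    · simp [stabilizerDiag, h₁]
    by_cases h₂ : (i : ℕ) < n - r
    · have hσ : tpqrPartner r i = i := if_neg (by omega)
      have h := hd i
      rw [hσ] at h
      have hre : (d i).re = 0 := by
        have := congrArg Complex.re h
        simp only [Complex.add_re, Complex.star_def, Complex.conj_re, Complex.zero_re] at this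
        linarith
      simp only [stabilizerDiag, h₁, h₂, if_false, if_true]
      apply Complex.ext <;> simp [hre]
    · have hσ : tpqrPartner r i = i.rev := if_pos (Or.inr (by omega))
      have h := congrArg star (hd i)
      rw [hσ] at h
      simp only [stabilizerDiag, h₁, h₂, if_false]
      simp only [star_add, star_zero, Complex.star_def, Complex.conj_conj] at h
      linear_combination h

theorem sum_stabilizerDiag (h2r : 2 * r ≤ n) (z : Fin n → ℂ) (x : Fin n → ℝ) :
    ∑ i, stabilizerDiag r z x i =
      Complex.I * ((2 * ∑ i ∈ Finset.univ.filter (fun i : Fin n => (i : ℕ) < r), (z i).im +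
        ∑ i ∈ Finset.univ.filter (fun i : Fin n => r ≤ (i : ℕ) ∧ (i : ℕ) < n - r), x i : ℝ) :
          ℂ) := by
  rw [Fin.sum_univ_eq_sum_lt_add_rev_add_sum_middle h2r]
  have houter : ∀ i ∈ Finset.univ.filter (fun i : Fin n => (i : ℕ) < r),
      stabilizerDiag r z x i + stabilizerDiag r z x i.rev =
        Complex.I * (2 * (z i).im : ℝ) := by
    intro i hi
    rw [Finset.mem_filter] at hi
    rw [stabilizerDiag_rev_of_lt h2r z x hi.2, ← sub_eq_add_neg]
    simp only [stabilizerDiag, hi.2, if_true, Complex.sub_conj]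
    push_cast; ring
  have hmiddle : ∀ i ∈ Finset.univ.filter (fun i : Fin n => r ≤ (i : ℕ) ∧ (i : ℕ) < n - r),
      stabilizerDiag r z x i = Complex.I * (x i : ℝ) := by
    intro i hi
    rw [Finset.mem_filter] at hi
    simp [stabilizerDiag, hi.2.2, not_lt.2 hi.2.1]
  rw [Finset.sum_congr rfl houter, Finset.sum_congr rfl hmiddle, ← Finset.mul_sum,
    ← Finset.mul_sum, ← mul_add]
  push_cast [Finset.mul_sum]
  ring

theorem stabilizerDiag_congr {z z' : Fin n → ℂ} {x x' : Fin n → ℝ}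
    (hz : ∀ i : Fin n, (i : ℕ) < r → z i = z' i)
    (hx : ∀ i : Fin n, r ≤ (i : ℕ) → (i : ℕ) < n - r → x i = x' i) :
    stabilizerDiag r z x = stabilizerDiag r z' x' := by
  funext i
  unfold stabilizerDiag
  split_ifs with h₁ h₂
  · exact hz i h₁
  · rw [hx i (not_lt.1 h₁) h₂]
  · rw [hz i.rev (by rw [Fin.val_rev]; omega)]

/-- `v = (Re z₁, …, Re z_r, x_{r+1}, …, x_{n-r}, Im z_r, …, Im z₁)` are real coordinates on the
diagonals `stabilizerDiag r z x`. -/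
noncomputable def stabilizerDiagReal (r : ℕ) : (Fin n → ℝ) →ₗ[ℝ] Fin n → ℂ where
  toFun v := stabilizerDiag r (fun i => v i + Complex.I * v i.rev) v
  map_add' v w := by
    funext i
    simp only [stabilizerDiag, Pi.add_apply]
    split_ifs <;> simp <;> ring
  map_smul' c v := by
    funext i
    simp only [stabilizerDiag, Pi.smul_apply, smul_eq_mul, Complex.real_smul, RingHom.id_apply]
    split_ifs <;> simp <;> ring

theorem stabilizerDiagReal_apply (r : ℕ) (v : Fin n → ℝ) :
    stabilizerDiagReal r v = stabilizerDiag r (fun i => v i + Complex.I * v i.rev) v :=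
  rfl

theorem stabilizerDiagReal_injective (r : ℕ) :
    Function.Injective (stabilizerDiagReal (n := n) r) := by
  refine Function.LeftInverse.injective
    (g := fun (d : Fin n → ℂ) (i : Fin n) => if (i : ℕ) < r then (d i).re else (d i).im)
    fun v => funext fun i => ?_
  simp only [stabilizerDiagReal_apply, stabilizerDiag]
  split_ifs <;> simp

/-- The imaginary part of the trace of `diagonal (stabilizerDiagReal r v)`. -/
noncomputable def stabilizerTraceForm (r : ℕ) : Module.Dual ℝ (Fin n → ℝ) where
  toFun v := 2 * ∑ i ∈ Finset.univ.filter (fun i : Fin n => (i : ℕ) < r), v i.rev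
    + ∑ i ∈ Finset.univ.filter (fun i : Fin n => r ≤ (i : ℕ) ∧ (i : ℕ) < n - r), v i
  map_add' v w := by simp only [Pi.add_apply, Finset.sum_add_distrib]; ring
  map_smul' c v := by
    simp only [Pi.smul_apply, smul_eq_mul, ← Finset.mul_sum, RingHom.id_apply]
    ring

theorem finrank_ker_stabilizerTraceForm (hn : 0 < n) :
    Module.finrank ℝ (LinearMap.ker (stabilizerTraceForm (n := n) r)) = n - 1 := by
  have hne : stabilizerTraceForm (n := n) r ≠ 0 := by
    intro h
    have h1 := LinearMap.congr_fun h 1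
    simp only [stabilizerTraceForm, LinearMap.coe_mk, AddHom.coe_mk, Pi.one_apply,
      Finset.sum_const, nsmul_eq_mul, mul_one, LinearMap.zero_apply] at h1
    have h0 : (⟨0, hn⟩ : Fin n) ∈ Finset.univ.filter (fun i : Fin n => (i : ℕ) < r) ∨
        (⟨0, hn⟩ : Fin n) ∈
          Finset.univ.filter (fun i : Fin n => r ≤ (i : ℕ) ∧ (i : ℕ) < n - r) := by
      simp only [Finset.mem_filter, Finset.mem_univ, true_and]; omega
    have h1' : 2 * (Finset.univ.filter (fun i : Fin n => (i : ℕ) < r)).card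
        + (Finset.univ.filter (fun i : Fin n => r ≤ (i : ℕ) ∧ (i : ℕ) < n - r)).card = 0 := by
      exact_mod_cast h1
    rcases h0 with h0 | h0 <;> have := Finset.card_pos.2 ⟨_, h0⟩ <;> omega
  have := Module.Dual.finrank_ker_add_one_of_ne_zero hne
  rw [Module.finrank_fin_fun] at this
  omega

theorem setOf_skew_diagonal_eq_setOf_stabilizerDiag (h2r : 2 * r ≤ n) :
    {A : Matrix (Fin n) (Fin n) ℂ |
        ∃ d, A = diagonal d ∧ ∑ i, d i = 0 ∧ ∀ i, star (d i) + d (tpqrPartner r i) = 0} =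
      {A | ∃ (z : Fin n → ℂ) (x : Fin n → ℝ),
        (2 * (∑ i ∈ Finset.univ.filter (fun i : Fin n => (i : ℕ) < r), (z i).im) +
          ∑ i ∈ Finset.univ.filter (fun i : Fin n => r ≤ (i : ℕ) ∧ (i : ℕ) < n - r), x i) = 0 ∧
        A = diagonal (stabilizerDiag r z x)} := by
  ext A
  constructor
  · rintro ⟨d, rfl, hsum, hd⟩
    obtain ⟨z, x, rfl⟩ := (exists_eq_stabilizerDiag_iff h2r d).2 hd
    rw [sum_stabilizerDiag h2r] at hsum
    rw [mul_eq_zero, or_iff_right Complex.I_ne_zero, Complex.ofReal_eq_zero] at hsum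
    exact ⟨z, x, hsum, rfl⟩
  · rintro ⟨z, x, hzx, rfl⟩
    refine ⟨_, rfl, ?_, (exists_eq_stabilizerDiag_iff h2r _).1 ⟨z, x, rfl⟩⟩
    rw [sum_stabilizerDiag h2r, hzx, Complex.ofReal_zero, mul_zero]

theorem setOf_diagonal_stabilizerDiag_eq_map (h2r : 2 * r ≤ n) :
    {A : Matrix (Fin n) (Fin n) ℂ | ∃ (z : Fin n → ℂ) (x : Fin n → ℝ),
        (2 * (∑ i ∈ Finset.univ.filter (fun i : Fin n => (i : ℕ) < r), (z i).im) +
          ∑ i ∈ Finset.univ.filter (fun i : Fin n => r ≤ (i : ℕ) ∧ (i : ℕ) < n - r), x i) = 0 ∧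
        A = diagonal (stabilizerDiag r z x)} =
      (LinearMap.ker (stabilizerTraceForm r)).map
        (diagonalLinearMap (Fin n) ℝ ℂ ∘ₗ stabilizerDiagReal r) := by
  ext A
  simp only [Set.mem_ofPred_eq, SetLike.mem_coe, Submodule.mem_map, LinearMap.mem_ker,
    LinearMap.coe_comp, Function.comp_apply, diagonalLinearMap_apply]
  constructor
  · rintro ⟨z, x, hzx, rfl⟩
    have hrev : ∀ i : Fin n, (i : ℕ) < r → ¬(i.rev : ℕ) < r ∧ ¬(i.rev : ℕ) < n - r := by
      intro i hi; rw [Fin.val_rev]; omega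
    refine ⟨fun i => if (i : ℕ) < r then (z i).re else if (i : ℕ) < n - r then x i
      else (z i.rev).im, ?_, ?_⟩
    · rw [← hzx]
      simp only [stabilizerTraceForm, LinearMap.coe_mk, AddHom.coe_mk]
      refine congrArg₂ (2 * · + ·) (Finset.sum_congr rfl fun i hi => ?_)
        (Finset.sum_congr rfl fun i hi => ?_)
      · rw [Finset.mem_filter] at hi
        simp only [(hrev i hi.2).1, (hrev i hi.2).2, if_false, Fin.rev_rev]
      · rw [Finset.mem_filter] at hi
        simp only [not_lt.2 hi.2.1, hi.2.2, if_false, if_true]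
    · rw [stabilizerDiagReal_apply]
      refine congrArg diagonal (stabilizerDiag_congr (fun i hi => ?_) fun i hi₁ hi₂ => ?_)
      · simp only [hi, if_true, (hrev i hi).1, (hrev i hi).2, if_false, Fin.rev_rev]
        rw [mul_comm]
        exact Complex.re_add_im (z i)
      · simp [not_lt.2 hi₁, hi₂]
  · rintro ⟨v, hv, rfl⟩
    refine ⟨fun i => v i + Complex.I * v i.rev, v, ?_, rfl⟩
    simpa [stabilizerTraceForm, stabilizerDiagReal_apply] using hv

end Stabilizer

theorem traceless_skew_and_exists_commutator_eq_smul_iff {p q r : ℕ} {lam : Fin (p + q) → ℂ}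
    (hinj : Function.Injective lam) (A : Matrix (Fin (p + q)) (Fin (p + q)) ℂ) :
    ((trace A = 0 ∧ Aᴴ * Tpqr p q r + Tpqr p q r * A = 0) ∧
        ∃ c : ℝ, A * diagonal lam - diagonal lam * A = c • diagonal lam) ↔
      ∃ d, A = diagonal d ∧ ∑ i, d i = 0 ∧ ∀ i, star (d i) + d (tpqrPartner r i) = 0 := by
  rw [exists_commutator_diagonal_eq_smul_iff hinj]
  constructor
  · rintro ⟨⟨htr, hT⟩, hA⟩
    rw [hA, trace_diagonal] at htr
    rw [hA, diagonal_conjTranspose_mul_Tpqr_add_eq_zero_iff] at hT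
    exact ⟨_, hA, htr, hT⟩
  · rintro ⟨d, rfl, hsum, hd⟩
    refine ⟨⟨by rwa [trace_diagonal], (diagonal_conjTranspose_mul_Tpqr_add_eq_zero_iff d).2 hd⟩,
      ?_⟩
    simp only [diagonal_apply_eq]


theorem stmt3 (p q r : ℕ) (hp : 1 ≤ p) (hrp : r ≤ p) (hrq : r ≤ q)
    (lam : Fin (p + q) → ℂ) (hinj : Function.Injective lam)
    (S : Matrix (Fin (p + q)) (Fin (p + q)) ℂ) (hS : S = Matrix.diagonal lam)
    (bset : Set (Matrix (Fin (p + q)) (Fin (p + q)) ℂ))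
    (hbset : bset = {A | (Matrix.trace A = 0 ∧ Aᴴ * Tpqr p q r + Tpqr p q r * A = 0) ∧
      ∃ c : ℝ, A * S - S * A = c • S}) :
    bset = {A | ∃ (z : Fin (p + q) → ℂ) (x : Fin (p + q) → ℝ),
        (2 * (∑ i ∈ Finset.univ.filter (fun i : Fin (p + q) => (i : ℕ) < r), (z i).im)
          + ∑ i ∈ Finset.univ.filter
              (fun i : Fin (p + q) => r ≤ (i : ℕ) ∧ (i : ℕ) < p + q - r), x i) = 0 ∧
        A = Matrix.diagonal (fun i : Fin (p + q) => if (i : ℕ) < r then z i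
            else if (i : ℕ) < p + q - r then Complex.I * (x i : ℂ)
            else -(starRingEnd ℂ) (z (Fin.rev i)))} ∧
    Module.finrank ℝ ↥(Submodule.span ℝ bset) = p + q - 1 ∧
    (∀ A ∈ bset, Aᴴ ∈ bset) := by
  have h2r : 2 * r ≤ p + q := by omega
  have hskew : bset = {A | ∃ d, A = diagonal d ∧ ∑ i, d i = 0 ∧
      ∀ i, star (d i) + d (tpqrPartner r i) = 0} := by
    subst hS hbset
    ext A
    exact traceless_skew_and_exists_commutator_eq_smul_iff hinj A
  have hset := hskew.trans (setOf_skew_diagonal_eq_setOf_stabilizerDiag h2r)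
  refine ⟨hset, ?_, ?_⟩
  · rw [hset, setOf_diagonal_stabilizerDiag_eq_map h2r, Submodule.span_eq,
      ← (Submodule.equivMapOfInjective _
        (diagonal_injective.comp (stabilizerDiagReal_injective r)) _).finrank_eq]
    exact finrank_ker_stabilizerTraceForm (by omega)
  · rw [hskew]
    rintro _ ⟨d, rfl, hsum, hd⟩
    refine ⟨star d, diagonal_conjTranspose d, ?_, star_add_star_tpqrPartner hd⟩
    simp only [Pi.star_apply, ← star_sum, hsum, star_zero]
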